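/- Let G = (V,E,c) be an edge-weighted directed graph without negative-weight closed walks, let R be a redundant edge set of G, and let G^c = (V, E∖R, c). Then for all i, j ∈ V, i ∼ j in G if and only if i ∼ j in G^c; in particular the equivalence class partition induced by ∼ is the same in G and in G^c. -/

import Mathlib

/-- `l` is a walk in edge set `E`: a nonempty list of vertices with consecutive edges. -/
def IsWalk {V : Type*} (E : Set (V × V)) (l : List V) : Prop :=
  l ≠ [] ∧ l.Chain' (fun a b => (a, b) ∈ E)

/-- The weight of a walk: sum of edge weights along consecutive pairs (with multiplicity). -/
def walkWeight {V : Type*} (c : V → V → ℝ) (l : List V) : ℝ :=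
  ((l.zip l.tail).map fun p => c p.1 p.2).sum

/-- `l` is a walk from `u` to `v`. -/
def IsWalkFrom {V : Type*} (E : Set (V × V)) (u v : V) (l : List V) : Prop :=
  IsWalk E l ∧ l.head? = some u ∧ l.getLast? = some v

/-- A closed walk: a walk with at least one edge whose first and last vertices agree. -/
def IsClosedWalk {V : Type*} (E : Set (V × V)) (l : List V) : Prop :=
  IsWalk E l ∧ 2 ≤ l.length ∧ l.head? = l.getLast?

/-- A simple path from `u` to `v`: a walk with all traversed vertices distinct. -/
def IsPathFrom {V : Type*} (E : Set (V × V)) (u v : V) (l : List V) : Prop :=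
  IsWalkFrom E u v l ∧ l.Nodup

/-- A cycle: a closed walk all of whose vertices other than the repeated endpoint are distinct. -/
def IsCycle {V : Type*} (E : Set (V × V)) (l : List V) : Prop :=
  IsClosedWalk E l ∧ l.tail.Nodup

/-- `x` satisfies the precedence relation system of `(V, E, c)`. -/
def Satisfies {V : Type*} (E : Set (V × V)) (c : V → V → ℝ) (x : V → ℝ) : Prop :=
  ∀ e ∈ E, x e.1 - x e.2 ≤ c e.1 e.2

/-- `R` is a redundant edge set of `(V, E, c)`: every edge of `R` has a replacement path
in the reduced graph of no greater weight. -/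
def IsRedundantEdgeSet {V : Type*} (E : Set (V × V)) (c : V → V → ℝ)
    (R : Set (V × V)) : Prop :=
  R ⊆ E ∧ ∀ e ∈ R, ∃ l, IsPathFrom (E \ R) e.1 e.2 l ∧ walkWeight c l ≤ c e.1 e.2

/-- `w` is the minimum weight of a walk from `i` to `j` in `(V, E, c)` (attained). -/
def IsMinWalkWeight {V : Type*} (E : Set (V × V)) (c : V → V → ℝ) (i j : V) (w : ℝ) : Prop :=
  (∃ l, IsWalkFrom E i j l ∧ walkWeight c l = w) ∧
  ∀ l, IsWalkFrom E i j l → w ≤ walkWeight c l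

/-- The relation `∼`: `i ∼ j` iff `i = j` or some zero-weight closed walk traverses both. -/
def Sim {V : Type*} (E : Set (V × V)) (c : V → V → ℝ) (i j : V) : Prop :=
  i = j ∨ ∃ l, IsClosedWalk E l ∧ walkWeight c l = 0 ∧ i ∈ l ∧ j ∈ l

lemma List.two_le_length_of_mem_of_ne {α : Type*} {l : List α} {a b : α}
    (ha : a ∈ l) (hb : b ∈ l) (hab : a ≠ b) : 2 ≤ l.length := by
  match l with
  | [] | [_] => simp_all
  | _ :: _ :: _ => simp

section

variable {V : Type*} {E F : Set (V × V)}

@[simp]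
lemma walkWeight_singleton (c : V → V → ℝ) (a : V) : walkWeight c [a] = 0 := by
  simp [walkWeight]

@[simp]
lemma walkWeight_cons_cons (c : V → V → ℝ) (a b : V) (t : List V) :
    walkWeight c (a :: b :: t) = c a b + walkWeight c (b :: t) := by
  simp [walkWeight]

lemma walkWeight_append_cons (c : V → V → ℝ) (p : List V) (w : V) (t : List V) :
    walkWeight c (p ++ w :: t) = walkWeight c (p ++ [w]) + walkWeight c (w :: t) := by
  induction p with
  | nil => simp
  | cons a p ih => cases p <;> simp_all [add_assoc]

lemma isWalk_iff_isChain {l : List V} :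
    IsWalk E l ↔ l ≠ [] ∧ l.IsChain (fun a b => (a, b) ∈ E) :=
  Iff.rfl

lemma IsWalk.mono (hEF : E ⊆ F) {l : List V} (h : IsWalk E l) : IsWalk F l :=
  ⟨h.1, h.2.imp fun _ _ hab => hEF hab⟩

lemma IsClosedWalk.mono (hEF : E ⊆ F) {l : List V} (h : IsClosedWalk E l) :
    IsClosedWalk F l :=
  ⟨h.1.mono hEF, h.2⟩

lemma isWalkFrom_singleton {u v a : V} : IsWalkFrom E u v [a] ↔ u = a ∧ v = a := by
  simp [IsWalkFrom, isWalk_iff_isChain, eq_comm]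

lemma isWalkFrom_cons_cons {u v a b : V} {t : List V} :
    IsWalkFrom E u v (a :: b :: t) ↔ u = a ∧ (a, b) ∈ E ∧ IsWalkFrom E b v (b :: t) := by
  simp only [IsWalkFrom, isWalk_iff_isChain, ne_eq, reduceCtorEq, not_false_eq_true,
    List.isChain_cons_cons, true_and, List.head?_cons, eq_comm, Option.some.injEq,
    List.getLast?_cons_cons]
  tauto

lemma IsClosedWalk.exists_isWalkFrom {l : List V} (h : IsClosedWalk E l) :
    ∃ u, IsWalkFrom E u u l := by
  obtain ⟨hwalk, -, hends⟩ := h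
  obtain ⟨u, t, rfl⟩ := List.exists_cons_of_ne_nil hwalk.1
  exact ⟨u, hwalk, rfl, hends.symm⟩

lemma IsWalkFrom.isClosedWalk {u : V} {l : List V} (h : IsWalkFrom E u u l)
    (hlen : 2 ≤ l.length) : IsClosedWalk E l :=
  ⟨h.1, hlen, h.2.1.trans h.2.2.symm⟩

lemma IsWalkFrom.exists_append (c : V → V → ℝ) {u w v : V} {p q : List V}
    (hp : IsWalkFrom E u w p) (hq : IsWalkFrom E w v q) :
    ∃ r, IsWalkFrom E u v r ∧ walkWeight c r = walkWeight c p + walkWeight c q ∧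
      ∀ x, x ∈ r ↔ x ∈ p ∨ x ∈ q := by
  obtain ⟨p, rfl⟩ := List.getLast?_eq_some_iff.mp hp.2.2
  obtain ⟨q, rfl⟩ := List.head?_eq_some_iff.mp hq.2.1
  refine ⟨p ++ w :: q, ⟨⟨by simp, ?_⟩, ?_, ?_⟩, walkWeight_append_cons c p w q, ?_⟩
  · have hpw := List.isChain_append.mp hp.1.2
    refine List.isChain_append.mpr ⟨hpw.1, hq.1.2, fun x hx y hy => hpw.2.2 x hx y ?_⟩
    simpa using hy
  · cases p <;> simpa using hp.2.1
  · simpa [List.getLast?_append] using hq.2.2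
  · simp only [List.mem_append, List.mem_cons]
    tauto

variable {c : V → V → ℝ}

theorem IsWalkFrom.exists_replacement
    (hrep : ∀ a b, (a, b) ∈ E → ∃ p, IsWalkFrom F a b p ∧ walkWeight c p ≤ c a b)
    {l : List V} {u v : V} (h : IsWalkFrom E u v l) :
    ∃ l', IsWalkFrom F u v l' ∧ walkWeight c l' ≤ walkWeight c l ∧ l ⊆ l' := by
  induction l generalizing u with
  | nil => exact absurd rfl h.1.1
  | cons a t ih =>
    cases t with
    | nil =>
      exact ⟨[a], isWalkFrom_singleton.mpr (isWalkFrom_singleton.mp h), le_rfl,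
        List.Subset.refl _⟩
    | cons b t =>
      obtain ⟨rfl, hab, hrest⟩ := isWalkFrom_cons_cons.mp h
      obtain ⟨l', hl', hwl', hsub⟩ := ih hrest
      obtain ⟨p, hp, hwp⟩ := hrep u b hab
      obtain ⟨r, hr, hwr, hmem⟩ := hp.exists_append c hl'
      refine ⟨r, hr, ?_, ?_⟩
      · rw [hwr, walkWeight_cons_cons]
        exact add_le_add hwp hwl'
      · intro x hx
        rcases List.mem_cons.mp hx with rfl | hx
        · exact (hmem x).mpr (Or.inl (List.mem_of_mem_head? hp.2.1))
        · exact (hmem x).mpr (Or.inr (hsub hx))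

lemma Sim.mono (hFE : F ⊆ E) {i j : V} (h : Sim F c i j) : Sim E c i j :=
  h.imp_right fun ⟨l, hl, hw, hi, hj⟩ => ⟨l, hl.mono hFE, hw, hi, hj⟩

/-- A zero-weight closed walk through `i` and `j` in `E` becomes one of weight at most zero
in `F`; it is still a closed walk of `E`, so its weight is exactly zero. -/
theorem Sim.of_replacement (hFE : F ⊆ E)
    (hnn : ∀ l : List V, IsClosedWalk E l → 0 ≤ walkWeight c l)
    (hrep : ∀ a b, (a, b) ∈ E → ∃ p, IsWalkFrom F a b p ∧ walkWeight c p ≤ c a b)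
    {i j : V} (h : Sim E c i j) : Sim F c i j := by
  rcases h with rfl | ⟨l, hl, hw, hi, hj⟩
  · exact Or.inl rfl
  by_cases hij : i = j
  · exact Or.inl hij
  obtain ⟨u, hu⟩ := hl.exists_isWalkFrom
  obtain ⟨l', hl', hwl', hsub⟩ := hu.exists_replacement hrep
  have hclosed : IsClosedWalk F l' :=
    hl'.isClosedWalk (List.two_le_length_of_mem_of_ne (hsub hi) (hsub hj) hij)
  have hw' : walkWeight c l' = 0 := le_antisymm (hw ▸ hwl') (hnn l' (hclosed.mono hFE))
  exact Or.inr ⟨l', hclosed, hw', hsub hi, hsub hj⟩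

lemma IsRedundantEdgeSet.exists_replacement {R : Set (V × V)} (hR : IsRedundantEdgeSet E c R)
    {a b : V} (hab : (a, b) ∈ E) :
    ∃ p, IsWalkFrom (E \ R) a b p ∧ walkWeight c p ≤ c a b := by
  by_cases haR : (a, b) ∈ R
  · obtain ⟨p, hp, hw⟩ := hR.2 (a, b) haR
    exact ⟨p, hp.1, hw⟩
  · have hwalk : IsWalk (E \ R) [a, b] := ⟨by simp, List.isChain_pair.mpr ⟨hab, haR⟩⟩
    exact ⟨[a, b], ⟨hwalk, rfl, rfl⟩, by simp⟩

end

theorem stmt13 {V : Type*} (E : Set (V × V)) (c : V → V → ℝ)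
    (hnn : ∀ l : List V, IsClosedWalk E l → 0 ≤ walkWeight c l)
    (R : Set (V × V)) (hR : IsRedundantEdgeSet E c R) :
    ∀ i j : V, Sim E c i j ↔ Sim (E \ R) c i j := fun _ _ =>
  ⟨Sim.of_replacement Set.sdiff_subset hnn fun _ _ => hR.exists_replacement,
    Sim.mono Set.sdiff_subset⟩
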